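/- arXiv:1712.05600 — 4 statements merged into one kernel-verified Lean document; each statement's English description precedes it below -/
import Mathlib

section
/- The multiparameter R-matrix R = u·Σ_i e_{ii}⊗e_{ii} + u^{-1}·Σ_{i>j} p_{ji} e_{ii}⊗e_{jj} + u^{-1}·Σ_{i<j} q_{ij} e_{ii}⊗e_{jj} + (u − u^{-1})·Σ_{i>j} e_{ij}⊗e_{ji} ∈ End(K^n ⊗ K^n) satisfies the Yang–Baxter equation R_{12} R_{13} R_{23} = R_{23} R_{13} R_{12} in End(K^n ⊗ K^n ⊗ K^n), where R_{ab} acts as R on the a-th and b-th tensor factors and as the identity on the remaining factor. -/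
open Finset

variable {K : Type*} [Field K] {A : Type*} [Ring A] [Algebra K A]

/-- The `(p,u)`-condition on the multiparameters: `u` is a unit with `u² ≠ -1`, the
`pᵢⱼ, qᵢⱼ` are units with `pᵢⱼqᵢⱼ = u²` for `i < j`, `pᵢⱼpⱼᵢ = qᵢⱼqⱼᵢ = 1` and
`pᵢᵢ = qᵢᵢ = 1`. -/
def PUCondition {N : ℕ} (p q : Fin N → Fin N → K) (u : K) : Prop :=
  u ≠ 0 ∧ u ^ 2 ≠ -1 ∧
    (∀ i j : Fin N, i < j → p i j * q i j = u ^ 2) ∧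
    (∀ i j : Fin N, p i j * p j i = 1) ∧
    (∀ i j : Fin N, q i j * q j i = 1) ∧
    (∀ i : Fin N, p i i = 1 ∧ q i i = 1)

/-- A `(p,u)`-matrix over the `K`-algebra `A`. -/
def IsPUMatrix {N : ℕ} (p q : Fin N → Fin N → K) (u : K)
    (T : Matrix (Fin N) (Fin N) A) : Prop :=
  ∀ i j k l : Fin N, i < j → k < l →
    T i k * T i l = q k l • (T i l * T i k) ∧
    T i k * T j k = p i j • (T j k * T i k) ∧
    q k l • (T i l * T j k) = p i j • (T j k * T i l) ∧
    (q k l)⁻¹ • (T i k * T j l) - (q i j)⁻¹ • (T j l * T i k)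
      = (1 - u⁻¹ ^ 2) • (T i l * T j k)

/-- Ordered product `f 0 * f 1 * ⋯ * f (t-1)` in a (possibly noncommutative) ring. -/
def oprod {t : ℕ} (f : Fin t → A) : A := ((List.finRange t).map f).prod

/-- The sign `(−q)_σ = (−1)^{ℓ(σ)} ∏_{i<j, σ(i)>σ(j)} q_{σ(j)σ(i)}`. -/
def qSign {N : ℕ} (q : Fin N → Fin N → K) (σ : Equiv.Perm (Fin N)) : K :=
  ∏ x ∈ Finset.univ.filter
      (fun x : Fin N × Fin N => x.1 < x.2 ∧ σ x.2 < σ x.1),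
    (-q (σ x.2) (σ x.1))

/-- The quantum determinant `det_q(T) = Σ_σ (−q)_σ t_{1σ(1)} ⋯ t_{Nσ(N)}`. -/
def qdet {N : ℕ} (q : Fin N → Fin N → K) (T : Matrix (Fin N) (Fin N) A) : A :=
  ∑ σ : Equiv.Perm (Fin N), qSign q σ • oprod (fun i => T i (σ i))

/-- The quantum minor with row indices `r` and column indices `c`. -/
def qminor {N t : ℕ} (q : Fin N → Fin N → K) (T : Matrix (Fin N) (Fin N) A)
    (r c : Fin t → Fin N) : A :=
  ∑ σ : Equiv.Perm (Fin t),
    qSign (fun a b => q (c a) (c b)) σ • oprod (fun a => T (r a) (c (σ a)))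
open Matrix Kronecker in
/-- The multiparameter R-matrix
`R = u Σᵢ eᵢᵢ⊗eᵢᵢ + u⁻¹ Σ_{i>j} pⱼᵢ eᵢᵢ⊗eⱼⱼ + u⁻¹ Σ_{i<j} qᵢⱼ eᵢᵢ⊗eⱼⱼ + (u−u⁻¹) Σ_{i>j} eᵢⱼ⊗eⱼᵢ`. -/
def Rmat {n : ℕ} (p q : Fin n → Fin n → K) (u : K) :
    Matrix (Fin n × Fin n) (Fin n × Fin n) K :=
  u • ∑ i : Fin n, single i i (1 : K) ⊗ₖ single i i (1 : K)
    + u⁻¹ • ∑ x ∈ Finset.univ.filter (fun x : Fin n × Fin n => x.2 < x.1),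
        p x.2 x.1 • (single x.1 x.1 (1 : K) ⊗ₖ single x.2 x.2 (1 : K))
    + u⁻¹ • ∑ x ∈ Finset.univ.filter (fun x : Fin n × Fin n => x.1 < x.2),
        q x.1 x.2 • (single x.1 x.1 (1 : K) ⊗ₖ single x.2 x.2 (1 : K))
    + (u - u⁻¹) • ∑ x ∈ Finset.univ.filter (fun x : Fin n × Fin n => x.2 < x.1),
        single x.1 x.2 (1 : K) ⊗ₖ single x.2 x.1 (1 : K)
/-- The operator `R₁₂ = R ⊗ id` on the triple tensor product `Kⁿ ⊗ Kⁿ ⊗ Kⁿ`. -/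
def lift12 {n : ℕ} (R : Matrix (Fin n × Fin n) (Fin n × Fin n) K) :
    Matrix (Fin n × Fin n × Fin n) (Fin n × Fin n × Fin n) K :=
  Matrix.of fun x y =>
    R (x.1, x.2.1) (y.1, y.2.1) * (if x.2.2 = y.2.2 then 1 else 0)

/-- The operator `R₁₃` acting on the first and third factors of `Kⁿ ⊗ Kⁿ ⊗ Kⁿ`. -/
def lift13 {n : ℕ} (R : Matrix (Fin n × Fin n) (Fin n × Fin n) K) :
    Matrix (Fin n × Fin n × Fin n) (Fin n × Fin n × Fin n) K :=
  Matrix.of fun x y =>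
    R (x.1, x.2.2) (y.1, y.2.2) * (if x.2.1 = y.2.1 then 1 else 0)

/-- The operator `R₂₃ = id ⊗ R` on the triple tensor product `Kⁿ ⊗ Kⁿ ⊗ Kⁿ`. -/
def lift23 {n : ℕ} (R : Matrix (Fin n × Fin n) (Fin n × Fin n) K) :
    Matrix (Fin n × Fin n × Fin n) (Fin n × Fin n × Fin n) K :=
  Matrix.of fun x y =>
    R (x.2.1, x.2.2) (y.2.1, y.2.2) * (if x.1 = y.1 then 1 else 0)

/-!
Read `R` as acting on row vectors: `R` sends `e_a ⊗ e_b` to `w a b • e_a ⊗ e_b`, plus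
`β • e_b ⊗ e_a` when `b < a`. Applying `R₁₂R₁₃R₂₃` and `R₂₃R₁₃R₁₂` to `e_a ⊗ e_b ⊗ e_c` produces
combinations of the permutations of `e_a ⊗ e_b ⊗ e_c`, and comparing coefficients shows that the
Yang–Baxter equation holds as soon as the diagonal weights are a constant `d` and
`w a b * w b a = d * (d - β)` for `a < b`. For `Rmat` we have `d = u`, `β = u - u⁻¹`, and
`w a b * w b a = u⁻² pₐᵦ qₐᵦ = 1 = u * (u - β)` by the `(p,u)`-condition.
-/

open Matrix

variable {n : ℕ}

def swapRMatrix (w : Fin n → Fin n → K) (β : K) : Matrix (Fin n × Fin n) (Fin n × Fin n) K :=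
  Matrix.of fun x y => (if y = x then w x.1 x.2 else 0) + (if y = x.swap ∧ x.2 < x.1 then β else 0)

theorem lift12_swapRMatrix_row (w : Fin n → Fin n → K) (β : K) (a b c : Fin n) :
    lift12 (swapRMatrix w β) (a, b, c)
      = w a b • Pi.single (a, b, c) 1 + (if b < a then β else 0) • Pi.single (b, a, c) 1 := by
  ext ⟨x, y, z⟩
  simp only [lift12, swapRMatrix, of_apply, Pi.add_apply, Pi.smul_apply, Pi.single_apply,
    Prod.mk.injEq, Prod.swap_prod_mk, smul_eq_mul]
  grind

theorem lift13_swapRMatrix_row (w : Fin n → Fin n → K) (β : K) (a b c : Fin n) :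
    lift13 (swapRMatrix w β) (a, b, c)
      = w a c • Pi.single (a, b, c) 1 + (if c < a then β else 0) • Pi.single (c, b, a) 1 := by
  ext ⟨x, y, z⟩
  simp only [lift13, swapRMatrix, of_apply, Pi.add_apply, Pi.smul_apply, Pi.single_apply,
    Prod.mk.injEq, Prod.swap_prod_mk, smul_eq_mul]
  grind

theorem lift23_swapRMatrix_row (w : Fin n → Fin n → K) (β : K) (a b c : Fin n) :
    lift23 (swapRMatrix w β) (a, b, c)
      = w b c • Pi.single (a, b, c) 1 + (if c < b then β else 0) • Pi.single (a, c, b) 1 := by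
  ext ⟨x, y, z⟩
  simp only [lift23, swapRMatrix, of_apply, Pi.add_apply, Pi.smul_apply, Pi.single_apply,
    Prod.mk.injEq, Prod.swap_prod_mk, smul_eq_mul]
  grind

theorem swapRMatrix_yang_baxter (w : Fin n → Fin n → K) (β d : K) (hdiag : ∀ a, w a a = d)
    (hswap : ∀ a b, a < b → w a b * w b a = d * (d - β)) :
    lift12 (swapRMatrix w β) * lift13 (swapRMatrix w β) * lift23 (swapRMatrix w β)
      = lift23 (swapRMatrix w β) * lift13 (swapRMatrix w β) * lift12 (swapRMatrix w β) := by
  funext ⟨a, b, c⟩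
  simp only [mul_apply_eq_vecMul, lift12_swapRMatrix_row, lift13_swapRMatrix_row,
    lift23_swapRMatrix_row, add_vecMul, smul_vecMul, single_one_vecMul, row]
  funext y
  simp only [Pi.add_apply, Pi.smul_apply, Pi.single_apply, smul_eq_mul]
  grind

def Rmat.weight (p q : Fin n → Fin n → K) (u : K) (a b : Fin n) : K :=
  if a = b then u else if b < a then u⁻¹ * p b a else u⁻¹ * q a b

theorem Rmat_eq_swapRMatrix (p q : Fin n → Fin n → K) (u : K) :
    Rmat p q u = swapRMatrix (Rmat.weight p q u) (u - u⁻¹) := by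
  ext ⟨a, b⟩ ⟨c, d⟩
  simp only [Rmat, single_kronecker_single, Matrix.add_apply, Matrix.smul_apply,
    Matrix.sum_apply, Matrix.single_apply, Prod.mk.eta, ite_and, smul_eq_mul, mul_ite, mul_one,
    mul_zero]
  simp only [Prod.mk.injEq, ite_and, Finset.sum_ite_eq', Finset.mem_filter, Finset.mem_univ,
    true_and, swapRMatrix, Rmat.weight, of_apply, Prod.swap_prod_mk]
  grind

/-- the multiparameter R-matrix satisfies the Yang–Baxter equation
`R₁₂ R₁₃ R₂₃ = R₂₃ R₁₃ R₁₂`. -/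
theorem Rmat_yang_baxter {n : ℕ} (p q : Fin n → Fin n → K) (u : K)
    (hpu : PUCondition p q u) :
    lift12 (Rmat p q u) * lift13 (Rmat p q u) * lift23 (Rmat p q u)
      = lift23 (Rmat p q u) * lift13 (Rmat p q u) * lift12 (Rmat p q u) := by
  obtain ⟨hu, -, hpq, -, -, -⟩ := hpu
  rw [Rmat_eq_swapRMatrix]
  refine swapRMatrix_yang_baxter _ _ u (fun a => if_pos rfl) fun a b hab => ?_
  simp only [Rmat.weight, if_neg hab.ne, if_neg hab.ne', if_neg hab.not_gt, if_pos hab]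
  field_simp
  linear_combination hpq a b hab
end

section
/- Let T be an n×n (p,u)-matrix over a K-algebra A and let x_1, …, x_n ∈ A satisfy x_i^2 = 0 and x_j x_i = −q_{ij} x_i x_j for i < j, with every x_k commuting with every entry t_{ij} of T. Set δ_i = Σ_{j=1}^n t_{ij} x_j. Then for any indices i_1, …, i_t, one has δ_{i_1} δ_{i_2} ⋯ δ_{i_t} = Σ_{j_1 < ⋯ < j_t} det_q(T^{i_1…i_t}_{j_1…j_t}) x_{j_1} x_{j_2} ⋯ x_{j_t}, where the sum runs over all strictly increasing column indices 1 ≤ j_1 < ⋯ < j_t ≤ n. -/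
open Finset

variable {K : Type*} [Field K] {A : Type*} [Ring A] [Algebra K A]

/-! Since the `x`'s commute with the entries of `T`, multiplying out gives
`∑_c t_{r₁c₁} ⋯ t_{r_t c_t} · x_{c₁} ⋯ x_{c_t}` over all `c : Fin t → Fin n`. Insertion sort
rewrites a word in the `x`'s as a scalar multiple of its sorted rearrangement, each exchange of
an adjacent descent `x_j x_i` (`i < j`) costing `-q_{ij}`. A word with a repeated letter thus
becomes a multiple of a word containing `x_i x_i`, hence vanishes, while for `c` strictly
increasing `x_{c∘σ} = (-q)_σ x_c`. Writing the injective `c` as `c₀ ∘ σ` with `c₀` increasing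
collects the coefficients of `x_{c₀}` into the quantum minors. -/

lemma oprod_eq_prod_ofFn {t : ℕ} (f : Fin t → A) : oprod f = (List.ofFn f).prod := by
  rw [oprod, List.ofFn_eq_map]

lemma oprod_comp_eq_prod_map_ofFn {ι : Type*} {t : ℕ} (y : ι → A) (c : Fin t → ι) :
    oprod (fun a => y (c a)) = ((List.ofFn c).map y).prod := by
  rw [oprod_eq_prod_ofFn, List.map_ofFn]
  rfl

lemma oprod_succ {t : ℕ} (f : Fin (t + 1) → A) :
    oprod f = f 0 * oprod (fun a => f a.succ) := by
  simp only [oprod_eq_prod_ofFn, List.ofFn_succ, List.prod_cons]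

lemma oprod_univ_sum {ι : Type*} [Fintype ι] :
    ∀ {t : ℕ} (f : Fin t → ι → A),
      oprod (fun a => ∑ j, f a j) = ∑ c : Fin t → ι, oprod (fun a => f a (c a))
  | 0, f => by simp [oprod]
  | t + 1, f => by
    rw [oprod_succ, oprod_univ_sum, Finset.sum_mul_sum, ← Fin.consEquiv (fun _ => ι) |>.sum_comp,
      Fintype.sum_prod_type]
    simp [oprod_succ]

lemma oprod_mul_of_commute :
    ∀ {t : ℕ} {f g : Fin t → A}, (∀ a b, Commute (g a) (f b)) →
      oprod (fun a => f a * g a) = oprod f * oprod g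
  | 0, _, _, _ => by simp [oprod]
  | t + 1, f, g, h => by
    have hg0 : Commute (g 0) (oprod fun a => f a.succ) := by
      rw [oprod_eq_prod_ofFn]
      exact Commute.list_prod_right _ _ fun z hz => by
        obtain ⟨a, rfl⟩ := List.mem_ofFn.mp hz
        exact h 0 a.succ
    rw [oprod_succ, oprod_succ f, oprod_succ g, oprod_mul_of_commute fun a b => h a.succ b.succ,
      mul_assoc, ← mul_assoc (g 0), hg0.eq, mul_assoc, ← mul_assoc]

section LinearOrder

variable {ι : Type*} [LinearOrder ι]

def inversionWeight (s : ι → ι → K) : List ι → K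
  | [] => 1
  | a :: L => (L.map fun b => if b < a then s b a else 1).prod * inversionWeight s L

lemma mul_prod_map_orderedInsert {y : ι → A} {s : ι → ι → K}
    (hy : ∀ a b, a < b → y b * y a = s a b • (y a * y b))
    (a : ι) : ∀ {L : List ι}, L.Pairwise (· ≤ ·) →
      y a * (L.map y).prod = (L.map fun b => if b < a then s b a else 1).prod •
        ((L.orderedInsert (· ≤ ·) a).map y).prod
  | [], _ => by simp
  | b :: L, hL => by
    rw [List.pairwise_cons] at hL
    by_cases hab : a ≤ b
    · have hone : (List.map (fun c => if c < a then s c a else 1) (b :: L)).prod = 1 :=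
        List.prod_eq_one fun z hz => by
          obtain ⟨c, hc, rfl⟩ := List.mem_map.mp hz
          exact if_neg <| not_lt.mpr <| hab.trans <| (List.mem_cons.mp hc).elim ge_of_eq (hL.1 c)
      rw [hone, one_smul, List.orderedInsert_cons_of_le _ _ hab]
      simp only [List.map_cons, List.prod_cons]
    · rw [List.orderedInsert_of_not_le _ _ hab]
      rw [not_le] at hab
      simp only [List.map_cons, List.prod_cons, if_pos hab]
      rw [← mul_assoc, hy b a hab, smul_mul_assoc, mul_assoc,
        mul_prod_map_orderedInsert hy a hL.2, mul_smul_comm, smul_smul]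

lemma prod_map_eq_inversionWeight_smul {y : ι → A} {s : ι → ι → K}
    (hy : ∀ a b, a < b → y b * y a = s a b • (y a * y b)) :
    ∀ L : List ι, (L.map y).prod = inversionWeight s L • ((L.insertionSort (· ≤ ·)).map y).prod
  | [] => by simp [inversionWeight]
  | a :: L => by
    rw [List.map_cons, List.prod_cons, prod_map_eq_inversionWeight_smul hy L, mul_smul_comm,
      mul_prod_map_orderedInsert hy a (List.pairwise_insertionSort _ L), smul_smul,
      List.insertionSort_cons, inversionWeight,
      ((List.perm_insertionSort _ L).map _).prod_eq, mul_comm]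

lemma inversionWeight_ofFn (s : ι → ι → K) : ∀ {t : ℕ} (f : Fin t → ι),
    inversionWeight s (List.ofFn f) =
      ∏ x ∈ univ.filter (fun x : Fin t × Fin t => x.1 < x.2 ∧ f x.2 < f x.1), s (f x.2) (f x.1)
  | 0, f => by simp [inversionWeight]
  | t + 1, f => by
    rw [List.ofFn_succ, inversionWeight, inversionWeight_ofFn, prod_filter, prod_filter,
      Fintype.prod_prod_type, Fintype.prod_prod_type, List.map_ofFn, List.prod_ofFn]
    simp [Fin.prod_univ_succ, Fin.succ_pos]

lemma oprod_comp_perm {t : ℕ} {y : Fin t → A} {Q : Fin t → Fin t → K}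
    (hy : ∀ a b, a < b → y b * y a = -Q a b • (y a * y b)) (σ : Equiv.Perm (Fin t)) :
    oprod (fun a => y (σ a)) = qSign Q σ • oprod y := by
  have hsort : (List.ofFn σ).insertionSort (· ≤ ·) = List.ofFn id :=
    ((List.perm_insertionSort _ _).trans (Equiv.Perm.ofFn_comp_perm σ id)).eq_of_pairwise'
      (List.pairwise_insertionSort _ _) (List.ofFn_id t ▸ List.pairwise_le_finRange t)
  rw [oprod_comp_eq_prod_map_ofFn, prod_map_eq_inversionWeight_smul hy, hsort,
    inversionWeight_ofFn, ← oprod_comp_eq_prod_map_ofFn]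
  rfl

lemma prod_map_eq_zero_of_not_nodup {x : ι → A} (hx2 : ∀ i, x i * x i = 0) :
    ∀ {L : List ι}, L.Pairwise (· ≤ ·) → ¬ L.Nodup → (L.map x).prod = 0
  | [], _, h => absurd List.nodup_nil h
  | a :: L, hL, h => by
    rw [List.pairwise_cons] at hL
    rw [List.nodup_cons, not_and_or, not_not] at h
    rcases h with ha | hdup
    · obtain ⟨b, L', rfl⟩ := List.exists_cons_of_ne_nil (List.ne_nil_of_mem ha)
      have hba : b = a := by
        rcases List.mem_cons.mp ha with rfl | ha'
        · rfl
        · exact le_antisymm ((List.pairwise_cons.mp hL.2).1 a ha') (hL.1 b List.mem_cons_self)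
      simp [hba, ← mul_assoc, hx2]
    · rw [List.map_cons, List.prod_cons, prod_map_eq_zero_of_not_nodup hx2 hL.2 hdup, mul_zero]

lemma oprod_eq_zero_of_not_injective {x : ι → A} {s : ι → ι → K} (hx2 : ∀ i, x i * x i = 0)
    (hx : ∀ i j, i < j → x j * x i = s i j • (x i * x j)) {t : ℕ} {c : Fin t → ι}
    (hc : ¬ Function.Injective c) : oprod (fun a => x (c a)) = 0 := by
  rw [oprod_comp_eq_prod_map_ofFn, prod_map_eq_inversionWeight_smul hx,
    prod_map_eq_zero_of_not_nodup hx2 (List.pairwise_insertionSort _ _), smul_zero]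
  rwa [(List.perm_insertionSort _ _).nodup_iff, List.nodup_ofFn]

lemma sum_injective_eq_sum_strictMono_sum_perm {M : Type*} [AddCommMonoid M] [Fintype ι]
    [DecidableEq ι] {t : ℕ} (F : (Fin t → ι) → M) :
    ∑ c ∈ univ.filter (fun c : Fin t → ι => Function.Injective c), F c =
      ∑ c ∈ univ.filter (fun c : Fin t → ι => ∀ a b, a < b → c a < c b),
        ∑ σ : Equiv.Perm (Fin t), F (c ∘ σ) := by
  rw [← sum_product']
  symm
  refine sum_nbij' (fun z => z.1 ∘ z.2) (fun c => (c ∘ Tuple.sort c, (Tuple.sort c)⁻¹))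
    ?_ ?_ ?_ ?_ ?_
  · rintro ⟨c, σ⟩ hc
    simp only [mem_filter, mem_univ, true_and, mem_product, and_true] at hc ⊢
    exact (StrictMono.injective fun a b hab => hc a b hab).comp σ.injective
  · intro c hc
    simp only [mem_filter, mem_univ, true_and, mem_product, and_true] at hc ⊢
    exact fun a b hab => (Tuple.monotone_sort c).strictMono_of_injective
      (hc.comp (Tuple.sort c).injective) hab
  · rintro ⟨c, σ⟩ hc
    simp only [mem_filter, mem_univ, true_and, mem_product, and_true] at hc
    have hmono : StrictMono c := fun a b hab => hc a b hab
    have hsort : σ⁻¹ = Tuple.sort (c ∘ σ) := Tuple.eq_sort_iff.mpr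
      ⟨by simpa [Function.comp_assoc] using hmono.monotone,
        fun i j hij h => absurd (hmono.injective (by simpa using h)) hij.ne⟩
    simp [← hsort, Function.comp_assoc]
  · intro c _
    simp [Function.comp_assoc]
  · intro z _
    rfl

end LinearOrder

theorem delta_prod_eq_sum_qminor_general {n : ℕ} (q : Fin n → Fin n → K)
    (T : Matrix (Fin n) (Fin n) A) (x : Fin n → A)
    (hx2 : ∀ i : Fin n, x i * x i = 0)
    (hxq : ∀ i j : Fin n, i < j → x j * x i = -(q i j • (x i * x j)))
    (hcomm : ∀ (k i j : Fin n), Commute (x k) (T i j))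
    (t : ℕ) (r : Fin t → Fin n) :
    oprod (fun a => ∑ j, T (r a) j * x j)
      = ∑ c ∈ Finset.univ.filter
          (fun c : Fin t → Fin n => ∀ a b : Fin t, a < b → c a < c b),
          qminor q T r c * oprod (fun a => x (c a)) := by
  have hx : ∀ i j, i < j → x j * x i = -q i j • (x i * x j) := fun i j hij => by
    rw [hxq i j hij, neg_smul]
  calc oprod (fun a => ∑ j, T (r a) j * x j)
      = ∑ c : Fin t → Fin n, oprod (fun a => T (r a) (c a)) * oprod (fun a => x (c a)) := by
        rw [oprod_univ_sum]
        exact sum_congr rfl fun c _ => oprod_mul_of_commute fun a b => hcomm _ _ _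
    _ = ∑ c ∈ univ.filter (fun c : Fin t → Fin n => Function.Injective c),
          oprod (fun a => T (r a) (c a)) * oprod (fun a => x (c a)) :=
        (sum_filter_of_ne fun c _ h => by_contra fun hc =>
          h (by rw [oprod_eq_zero_of_not_injective hx2 hx hc, mul_zero])).symm
    _ = ∑ c ∈ univ.filter (fun c : Fin t → Fin n => ∀ a b : Fin t, a < b → c a < c b),
          ∑ σ : Equiv.Perm (Fin t),
            oprod (fun a => T (r a) (c (σ a))) * oprod (fun a => x (c (σ a))) :=
        sum_injective_eq_sum_strictMono_sum_perm _
    _ = _ := sum_congr rfl fun c hc => by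
        have hy := fun a b (hab : a < b) => hx (c a) (c b) ((mem_filter.mp hc).2 a b hab)
        rw [qminor, sum_mul]
        refine sum_congr rfl fun σ _ => ?_
        rw [oprod_comp_perm (y := fun a => x (c a)) hy, mul_smul_comm, smul_mul_assoc]

/-- expansion of a product of the `δᵢ = Σⱼ tᵢⱼ xⱼ` in terms of quantum
minors: `δ_{i₁} ⋯ δ_{i_t} = Σ_{j₁<⋯<j_t} det_q(T^{i₁…i_t}_{j₁…j_t}) x_{j₁} ⋯ x_{j_t}`. -/
theorem delta_prod_eq_sum_qminor {n : ℕ} (p q : Fin n → Fin n → K) (u : K)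
    (hpu : PUCondition p q u) (T : Matrix (Fin n) (Fin n) A)
    (hT : IsPUMatrix p q u T) (x : Fin n → A)
    (hx2 : ∀ i : Fin n, x i * x i = 0)
    (hxq : ∀ i j : Fin n, i < j → x j * x i = -(q i j • (x i * x j)))
    (hcomm : ∀ (k i j : Fin n), Commute (x k) (T i j))
    (t : ℕ) (r : Fin t → Fin n) :
    oprod (fun a => ∑ j, T (r a) j * x j)
      = ∑ c ∈ Finset.univ.filter
          (fun c : Fin t → Fin n => ∀ a b : Fin t, a < b → c a < c b),
          qminor q T r c * oprod (fun a => x (c a)) :=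
  delta_prod_eq_sum_qminor_general q T x hx2 hxq hcomm t r
end

section
/- (Pfaffian expansion) Let b_{ij} ∈ A for 1 ≤ i < j ≤ 2n, extended by b_{ji} = −p_{ij} b_{ij} for i < j (a p-antisymmetric matrix B). Then for every 0 ≤ t ≤ n, Pf_q(B) = Σ_I inv(I, I^c) · Pf_q(B_I) · Pf_q(B_{I^c}), where the sum runs over all subsets I = {i_1 < ⋯ < i_{2t}} of {1,…,2n} of size 2t, I^c is the complement, inv(I, J) = ∏_{i∈I, j∈J, i>j} (−q_{ji}), and Pf_q(B_I) is the quantum Pfaffian of the submatrix of B on the indices of I (using the parameters q_{ab} for a, b ∈ I with the induced ordering). -/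
open Finset

variable {K : Type*} [Field K] {A : Type*} [Ring A] [Algebra K A]

/-- `pairIdx i r = 2i + r` viewed in `Fin (2n)`. -/
def pairIdx {n : ℕ} (i : Fin n) (r : Fin 2) : Fin (2 * n) :=
  ⟨2 * i.val + r.val, by have hi := i.isLt; have hr := r.isLt; omega⟩

/-- The multiparameter quantum Pfaffian
`Pf_q(B) = Σ_{σ∈Π} (−q)_σ b_{σ(1)σ(2)} ⋯ b_{σ(2n−1)σ(2n)}` where `Π` consists of the
permutations with `σ(2i−1) < σ(2i)` for all `i`. -/
def qpf {n : ℕ} (q : Fin (2 * n) → Fin (2 * n) → K)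
    (B : Fin (2 * n) → Fin (2 * n) → A) : A :=
  ∑ σ ∈ Finset.univ.filter
      (fun σ : Equiv.Perm (Fin (2 * n)) =>
        ∀ i : Fin n, σ (pairIdx i 0) < σ (pairIdx i 1)),
    qSign q σ • oprod (fun i : Fin n => B (σ (pairIdx i 0)) (σ (pairIdx i 1)))

/-! Cut a permutation `σ` of `Fin (2n)` into its restrictions to the first `2t` and the last
`2(n - t)` positions. Each restriction factors uniquely as the increasing enumeration of its image
(`I`, resp. `Iᶜ`) composed with a permutation, and `σ` is pair-increasing iff both permutations
are. Under this bijection the monomial of `σ` is the product of the two block monomials, and the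
inversions of `σ` are those inside each block together with the pairs `(i, j) ∈ I × Iᶜ` with
`j < i`, which contribute `inv(I, Iᶜ)`. -/

open Function Equiv

theorem Tuple.sort_comp_perm {α : Type*} [LinearOrder α] {k : ℕ} {f : Fin k → α}
    (hf : StrictMono f) (τ : Perm (Fin k)) : Tuple.sort (f ∘ τ) = τ⁻¹ := by
  refine (Tuple.eq_sort_iff.mpr ⟨?_, fun i j hij hfij => ?_⟩).symm
  · simpa [Function.comp_def] using hf.monotone
  · simp only [Perm.coe_inv, comp_apply, apply_symm_apply] at hfij
    exact absurd (hf.injective hfij) hij.ne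

theorem oprod_eq_mul_of_add {t m n : ℕ} (h : t + m = n) (F : Fin n → A) :
    oprod F = oprod (fun i => F (Fin.cast h (Fin.castAdd m i)))
      * oprod (fun j => F (Fin.cast h (Fin.natAdd t j))) := by
  subst h
  simp only [oprod, ← List.ofFn_eq_map, List.ofFn_add, List.prod_append, Fin.cast_eq_self]
  rfl

theorem Fin.forall_cast_add {t m n : ℕ} (hn : t + m = n) {P : Fin n → Prop} :
    (∀ i, P i) ↔
      (∀ i, P (Fin.cast hn (Fin.castAdd m i))) ∧ ∀ j, P (Fin.cast hn (Fin.natAdd t j)) := by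
  subst hn
  exact Fin.forall_fin_add P

section Blocks

variable {k l N : ℕ} (h : k + l = N)

def blockEquiv : Fin k ⊕ Fin l ≃ Fin N := finSumFinEquiv.trans (finCongr h)

@[simp] theorem blockEquiv_inl_val (a : Fin k) : (blockEquiv h (.inl a) : ℕ) = a := rfl
@[simp] theorem blockEquiv_inr_val (b : Fin l) : (blockEquiv h (.inr b) : ℕ) = k + b := rfl

@[simp] theorem blockEquiv_inl_lt_inl {a a' : Fin k} :
    blockEquiv h (.inl a) < blockEquiv h (.inl a') ↔ a < a' := by
  simp only [Fin.lt_def, blockEquiv_inl_val]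

@[simp] theorem blockEquiv_inr_lt_inr {b b' : Fin l} :
    blockEquiv h (.inr b) < blockEquiv h (.inr b') ↔ b < b' := by
  simp only [Fin.lt_def, blockEquiv_inr_val, add_lt_add_iff_left]

@[simp] theorem blockEquiv_inl_lt_inr (a : Fin k) (b : Fin l) :
    blockEquiv h (.inl a) < blockEquiv h (.inr b) := by
  simp only [Fin.lt_def, blockEquiv_inl_val, blockEquiv_inr_val]
  omega

@[simp] theorem not_blockEquiv_inr_lt_inl (a : Fin k) (b : Fin l) :
    ¬ blockEquiv h (.inr b) < blockEquiv h (.inl a) :=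
  (blockEquiv_inl_lt_inr h a b).asymm

theorem qSign_eq_prod_ite (q : Fin N → Fin N → K) (σ : Perm (Fin N)) :
    qSign q σ = ∏ x, ∏ y, if x < y ∧ σ y < σ x then -q (σ y) (σ x) else 1 := by
  rw [qSign, prod_filter, ← Fintype.prod_prod_type']

theorem qSign_eq_of_blocks (q : Fin N → Fin N → K) {e : Fin k → Fin N} {f : Fin l → Fin N}
    (he : StrictMono e) (hf : StrictMono f) (σ₁ : Perm (Fin k)) (σ₂ : Perm (Fin l))
    {σ : Perm (Fin N)} (hσl : ∀ a, σ (blockEquiv h (.inl a)) = e (σ₁ a))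
    (hσr : ∀ b, σ (blockEquiv h (.inr b)) = f (σ₂ b)) :
    qSign q σ = (∏ x ∈ univ.filter (fun x : Fin k × Fin l => f x.2 < e x.1),
        -q (f x.2) (e x.1)) *
      (qSign (fun a b => q (e a) (e b)) σ₁ * qSign (fun a b => q (f a) (f b)) σ₂) := by
  have hcross : ∏ x ∈ univ.filter (fun x : Fin k × Fin l => f x.2 < e x.1), -q (f x.2) (e x.1)
      = ∏ a, ∏ b, if f (σ₂ b) < e (σ₁ a) then -q (f (σ₂ b)) (e (σ₁ a)) else 1 := by
    rw [prod_filter, Fintype.prod_prod_type, ← Equiv.prod_comp σ₁]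
    exact prod_congr rfl fun a _ => (Equiv.prod_comp σ₂ _).symm
  rw [qSign_eq_prod_ite, ← (blockEquiv h).prod_comp]
  simp_rw [← (blockEquiv h).prod_comp (fun y => ite _ _ _)]
  simp only [Fintype.prod_sum_type, prod_mul_distrib, hσl, hσr, blockEquiv_inl_lt_inl,
    blockEquiv_inr_lt_inr, blockEquiv_inl_lt_inr, not_blockEquiv_inr_lt_inl, he.lt_iff_lt,
    hf.lt_iff_lt, true_and, false_and, if_false, prod_const_one, mul_one, hcross,
    qSign_eq_prod_ite]
  ring

theorem exists_perm_of_blocks {e : Fin k → Fin N} {f : Fin l → Fin N} (he : Injective e)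
    (hf : Injective f) (hef : ∀ a b, e a ≠ f b) (σ₁ : Perm (Fin k)) (σ₂ : Perm (Fin l)) :
    ∃ σ : Perm (Fin N), (∀ a, σ (blockEquiv h (.inl a)) = e (σ₁ a)) ∧
      ∀ b, σ (blockEquiv h (.inr b)) = f (σ₂ b) := by
  have hbij : Bijective (Sum.elim e f) := by
    rw [Fintype.bijective_iff_injective_and_card]
    exact ⟨he.sumElim hf hef, by simp [h]⟩
  exact ⟨(blockEquiv h).symm.trans ((sumCongr σ₁ σ₂).trans (ofBijective _ hbij)),
    fun a => by simp, fun b => by simp⟩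

/-- Both restrictions of `σ` to the blocks, each written as (increasing map) ∘ (permutation);
the two increasing maps enumerate a subset `I` of `Fin N` and its complement. -/
noncomputable def blockDecomp (σ : Perm (Fin N)) :
    ((Fin k → Fin N) × (Fin l → Fin N)) × (Perm (Fin k) × Perm (Fin l)) :=
  let g := fun a => σ (blockEquiv h (.inl a))
  let g' := fun b => σ (blockEquiv h (.inr b))
  ((g ∘ Tuple.sort g, g' ∘ Tuple.sort g'), ((Tuple.sort g)⁻¹, (Tuple.sort g')⁻¹))

theorem strictMono_blockDecomp (σ : Perm (Fin N)) :
    StrictMono (blockDecomp h σ).1.1 ∧ StrictMono (blockDecomp h σ).1.2 :=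
  ⟨(Tuple.monotone_sort _).strictMono_of_injective
      (σ.injective.comp ((blockEquiv h).injective.comp Sum.inl_injective)
        |>.comp (Tuple.sort _).injective),
    (Tuple.monotone_sort _).strictMono_of_injective
      (σ.injective.comp ((blockEquiv h).injective.comp Sum.inr_injective)
        |>.comp (Tuple.sort _).injective)⟩

theorem blockDecomp_disjoint (σ : Perm (Fin N)) (a : Fin k) (b : Fin l) :
    (blockDecomp h σ).1.1 a ≠ (blockDecomp h σ).1.2 b := by
  simp [blockDecomp]

theorem blockDecomp_eq_iff {σ : Perm (Fin N)} {e : Fin k → Fin N} {f : Fin l → Fin N}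
    (he : StrictMono e) (hf : StrictMono f) (σ₁ : Perm (Fin k)) (σ₂ : Perm (Fin l)) :
    blockDecomp h σ = ((e, f), (σ₁, σ₂)) ↔
      (∀ a, σ (blockEquiv h (.inl a)) = e (σ₁ a)) ∧
        ∀ b, σ (blockEquiv h (.inr b)) = f (σ₂ b) := by
  constructor
  · intro hσ
    simp only [blockDecomp, Prod.mk.injEq] at hσ
    obtain ⟨⟨rfl, rfl⟩, rfl, rfl⟩ := hσ
    simp
  · rintro ⟨hl, hr⟩
    have hl' : (fun a => σ (blockEquiv h (.inl a))) = e ∘ σ₁ := funext hl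
    have hr' : (fun b => σ (blockEquiv h (.inr b))) = f ∘ σ₂ := funext hr
    simp only [blockDecomp, hl', hr', Tuple.sort_comp_perm he, Tuple.sort_comp_perm hf, inv_inv]
    ext <;> simp

theorem blockDecomp_injective : Injective (blockDecomp (N := N) h) := by
  intro σ σ' hσσ'
  obtain ⟨he, hf⟩ := strictMono_blockDecomp h σ'
  obtain ⟨hl, hr⟩ := (blockDecomp_eq_iff h he hf _ _).mp hσσ'
  obtain ⟨hl', hr'⟩ := (blockDecomp_eq_iff h he hf _ _).mp rfl
  ext1 x
  obtain ⟨y | y, rfl⟩ := (blockEquiv h).surjective x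
  · rw [hl, hl']
  · rw [hr, hr']

end Blocks

def pairPerms (n : ℕ) : Finset (Perm (Fin (2 * n))) :=
  univ.filter fun σ => ∀ i, σ (pairIdx i 0) < σ (pairIdx i 1)

def pfMonomial {X : Type*} {n : ℕ} (B : X → X → A) (g : Fin (2 * n) → X) : A :=
  oprod fun i => B (g (pairIdx i 0)) (g (pairIdx i 1))

theorem qpf_eq_sum_pairPerms {n : ℕ} (q : Fin (2 * n) → Fin (2 * n) → K)
    (B : Fin (2 * n) → Fin (2 * n) → A) :
    qpf q B = ∑ σ ∈ pairPerms n, qSign q σ • pfMonomial B σ :=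
  rfl

theorem smul_qpf_mul_qpf {t m : ℕ} (c : K) (q₁ : Fin (2 * t) → Fin (2 * t) → K)
    (B₁ : Fin (2 * t) → Fin (2 * t) → A) (q₂ : Fin (2 * m) → Fin (2 * m) → K)
    (B₂ : Fin (2 * m) → Fin (2 * m) → A) :
    c • (qpf q₁ B₁ * qpf q₂ B₂)
      = ∑ σ₁ ∈ pairPerms t, ∑ σ₂ ∈ pairPerms m,
          (c * (qSign q₁ σ₁ * qSign q₂ σ₂)) •
            (pfMonomial B₁ σ₁ * pfMonomial B₂ σ₂) := by
  simp only [qpf_eq_sum_pairPerms, sum_mul_sum, smul_sum, smul_mul_smul_comm, smul_smul]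

section Pairs

variable {t m n : ℕ} (hn : t + m = n)

def pairBlocks : Fin (2 * t) ⊕ Fin (2 * m) ≃ Fin (2 * n) := blockEquiv (by rw [← hn, mul_add])

theorem pairIdx_castAdd (i : Fin t) (r : Fin 2) :
    pairIdx (Fin.cast hn (Fin.castAdd m i)) r = pairBlocks hn (.inl (pairIdx i r)) :=
  Fin.ext rfl

theorem pairIdx_natAdd (j : Fin m) (r : Fin 2) :
    pairIdx (Fin.cast hn (Fin.natAdd t j)) r = pairBlocks hn (.inr (pairIdx j r)) := by
  ext
  simp only [pairIdx, Fin.val_cast, Fin.val_natAdd, pairBlocks, blockEquiv_inr_val]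
  ring

theorem pfMonomial_eq_of_blocks (B : Fin (2 * n) → Fin (2 * n) → A)
    {σ : Fin (2 * n) → Fin (2 * n)} {g : Fin (2 * t) → Fin (2 * n)}
    {g' : Fin (2 * m) → Fin (2 * n)} (hl : ∀ a, σ (pairBlocks hn (.inl a)) = g a)
    (hr : ∀ b, σ (pairBlocks hn (.inr b)) = g' b) :
    pfMonomial B σ = pfMonomial B g * pfMonomial B g' := by
  simp only [pfMonomial, oprod_eq_mul_of_add hn, pairIdx_castAdd, pairIdx_natAdd, hl, hr]

theorem mem_pairPerms_iff_of_blocks {σ : Perm (Fin (2 * n))}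
    {e : Fin (2 * t) → Fin (2 * n)} {f : Fin (2 * m) → Fin (2 * n)} (he : StrictMono e)
    (hf : StrictMono f) {σ₁ : Perm (Fin (2 * t))} {σ₂ : Perm (Fin (2 * m))}
    (hl : ∀ a, σ (pairBlocks hn (.inl a)) = e (σ₁ a))
    (hr : ∀ b, σ (pairBlocks hn (.inr b)) = f (σ₂ b)) :
    σ ∈ pairPerms n ↔ σ₁ ∈ pairPerms t ∧ σ₂ ∈ pairPerms m := by
  simp only [pairPerms, mem_filter, mem_univ, true_and, Fin.forall_cast_add hn, pairIdx_castAdd,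
    pairIdx_natAdd, hl, hr, he.lt_iff_lt, hf.lt_iff_lt]

end Pairs

/-- A `2t`-element subset `I` together with its complement is encoded by the pair `(e, f)` of
their strictly increasing enumerations. -/
theorem qpf_expansion_general {n : ℕ} (q : Fin (2 * n) → Fin (2 * n) → K)
    (B : Fin (2 * n) → Fin (2 * n) → A) (t : ℕ) (ht : t ≤ n) :
    qpf q B
      = ∑ ef ∈ Finset.univ.filter
          (fun ef : (Fin (2 * t) → Fin (2 * n)) × (Fin (2 * (n - t)) → Fin (2 * n)) =>
            (∀ a b, a < b → ef.1 a < ef.1 b) ∧ (∀ a b, a < b → ef.2 a < ef.2 b) ∧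
            (∀ a b, ef.1 a ≠ ef.2 b)),
        (∏ x ∈ Finset.univ.filter
            (fun x : Fin (2 * t) × Fin (2 * (n - t)) => ef.2 x.2 < ef.1 x.1),
          (-q (ef.2 x.2) (ef.1 x.1))) •
        (qpf (fun a b => q (ef.1 a) (ef.1 b)) (fun a b => B (ef.1 a) (ef.1 b))
          * qpf (fun a b => q (ef.2 a) (ef.2 b)) (fun a b => B (ef.2 a) (ef.2 b))) := by
  have hn : t + (n - t) = n := Nat.add_sub_cancel' ht
  have hb : 2 * t + 2 * (n - t) = 2 * n := by omega
  simp only [smul_qpf_mul_qpf, ← sum_product']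
  rw [qpf_eq_sum_pairPerms]
  refine sum_bij (fun σ _ => blockDecomp hb σ) ?_ (fun σ _ σ' _ h => blockDecomp_injective hb h)
    ?_ ?_
  · intro σ hσ
    obtain ⟨he, hf⟩ := strictMono_blockDecomp hb σ
    obtain ⟨hl, hr⟩ := (blockDecomp_eq_iff hb he hf _ _).mp rfl
    simp only [mem_product, mem_filter, mem_univ, true_and]
    exact ⟨⟨fun a b h => he h, fun a b h => hf h, blockDecomp_disjoint hb σ⟩,
      (mem_pairPerms_iff_of_blocks hn he hf hl hr).mp hσ⟩
  · rintro ⟨⟨e, f⟩, σ₁, σ₂⟩ hz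
    simp only [mem_product, mem_filter, mem_univ, true_and] at hz
    obtain ⟨⟨he, hf, hef⟩, h₁, h₂⟩ := hz
    obtain ⟨σ, hl, hr⟩ := exists_perm_of_blocks hb (StrictMono.injective he)
      (StrictMono.injective hf) hef σ₁ σ₂
    exact ⟨σ, (mem_pairPerms_iff_of_blocks hn he hf hl hr).mpr ⟨h₁, h₂⟩,
      (blockDecomp_eq_iff hb he hf σ₁ σ₂).mpr ⟨hl, hr⟩⟩
  · intro σ _
    obtain ⟨he, hf⟩ := strictMono_blockDecomp hb σ
    obtain ⟨hl, hr⟩ := (blockDecomp_eq_iff hb he hf _ _).mp rfl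
    rw [qSign_eq_of_blocks hb q he hf _ _ hl hr, pfMonomial_eq_of_blocks hn B hl hr]
    rfl

/-- Pfaffian expansion: `Pf_q(B) = Σ_I inv(I, Iᶜ) Pf_q(B_I) Pf_q(B_{Iᶜ})`,
the sum running over all `2t`-element subsets `I` of `{1, …, 2n}`; a subset together
with its complement is encoded by the pair of strictly increasing enumerations
`(e, f)` with disjoint ranges. -/
theorem qpf_expansion {n : ℕ} (p q : Fin (2 * n) → Fin (2 * n) → K) (u : K)
    (hpu : PUCondition p q u) (B : Fin (2 * n) → Fin (2 * n) → A)
    (hB : ∀ i j : Fin (2 * n), i < j → B j i = -(p i j • B i j))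
    (t : ℕ) (ht : t ≤ n) :
    qpf q B
      = ∑ ef ∈ Finset.univ.filter
          (fun ef : (Fin (2 * t) → Fin (2 * n)) × (Fin (2 * (n - t)) → Fin (2 * n)) =>
            (∀ a b, a < b → ef.1 a < ef.1 b) ∧ (∀ a b, a < b → ef.2 a < ef.2 b) ∧
            (∀ a b, ef.1 a ≠ ef.2 b)),
        (∏ x ∈ Finset.univ.filter
            (fun x : Fin (2 * t) × Fin (2 * (n - t)) => ef.2 x.2 < ef.1 x.1),
          (-q (ef.2 x.2) (ef.1 x.1))) •
        (qpf (fun a b => q (ef.1 a) (ef.1 b)) (fun a b => B (ef.1 a) (ef.1 b))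
          * qpf (fun a b => q (ef.2 a) (ef.2 b)) (fun a b => B (ef.2 a) (ef.2 b))) :=
  qpf_expansion_general q B t ht
end

section
/- (Hyper-Pfaffian expansion) Let b_{i_1…i_m} ∈ A for all strictly increasing tuples 1 ≤ i_1 < ⋯ < i_m ≤ mn (a hypermatrix B). Then for every 0 ≤ t ≤ n, Pf_q(B) = Σ_I inv(I, I^c) · Pf_q(B_I) · Pf_q(B_{I^c}), where the sum runs over all subsets I of {1,…,mn} of size mt, I^c is the complement, inv(I, J) = ∏_{i∈I, j∈J, i>j} (−q_{ji}), and Pf_q(B_I) is the quantum hyper-Pfaffian of the sub-hypermatrix of B on the indices of I (using the parameters q_{ab} for a, b ∈ I with the induced ordering). -/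
/-!
Cutting a block-increasing permutation `σ` of `{1, …, m(t+s)}` after its first `t` blocks
records the set `I = σ({1, …, mt})` and, by sorting `σ` on each half, permutations `τ` of
`{1, …, mt}` and `ρ` of `{1, …, ms}` with `σ = (e_I ∘ τ) ⊔ (e_{Iᶜ} ∘ ρ)`, where `e_I`, `e_{Iᶜ}` are
the increasing enumerations; `σ` is block-increasing iff `τ` and `ρ` are. An inversion of `σ`
lies inside `I`, inside `Iᶜ`, or is a pair `j ∈ Iᶜ`, `i ∈ I` with `j < i`: the first two kinds
give `(−q)_τ` and `(−q)_ρ` for the restricted parameters, and the third gives `inv(I, Iᶜ)`,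
which does not depend on `τ` and `ρ`. Summing over `(I, τ, ρ)` factors the Pfaffian.
-/

open Finset

variable {K : Type*} [Field K] {A : Type*} [Ring A] [Algebra K A]

/-- `midx k a = m·k + a` viewed in `Fin (m·n)`. -/
def midx {m n : ℕ} (k : Fin n) (a : Fin m) : Fin (m * n) :=
  ⟨m * k.val + a.val, by
    have hk := k.isLt; have ha := a.isLt
    calc m * k.val + a.val < m * (k.val + 1) := by rw [Nat.mul_succ]; omega
      _ ≤ m * n := Nat.mul_le_mul_left m hk⟩

/-- The multiparameter quantum hyper-Pfaffian
`Pf_q(B) = Σ_{σ∈Π} (−q)_σ b_{σ(1)…σ(m)} ⋯ b_{σ(m(n−1)+1)…σ(mn)}` where `Π` consists of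
the permutations increasing on each consecutive block of length `m`. -/
def qhpf {m n : ℕ} (q : Fin (m * n) → Fin (m * n) → K)
    (B : (Fin m → Fin (m * n)) → A) : A :=
  ∑ σ ∈ Finset.univ.filter
      (fun σ : Equiv.Perm (Fin (m * n)) =>
        ∀ (k : Fin n) (a b : Fin m), a < b → σ (midx k a) < σ (midx k b)),
    qSign q σ • oprod (fun k : Fin n => B (fun a => σ (midx k a)))

open Function Equiv

section Inversions

variable {R : Type*} [CommRing R] {N : ℕ}

def inversionProd {k : ℕ} (q : Fin N → Fin N → R) (g : Fin k → Fin N) : R :=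
  ∏ x ∈ univ.filter (fun x : Fin k × Fin k => x.1 < x.2 ∧ g x.2 < g x.1), -q (g x.2) (g x.1)

def crossInversionProd {a b : ℕ} (q : Fin N → Fin N → R) (e : Fin a → Fin N)
    (f : Fin b → Fin N) : R :=
  ∏ x ∈ univ.filter (fun x : Fin a × Fin b => f x.2 < e x.1), -q (f x.2) (e x.1)

lemma inversionProd_comp_cast {k k' : ℕ} (h : k = k') (q : Fin N → Fin N → R)
    (g : Fin k' → Fin N) : inversionProd q (g ∘ Fin.cast h) = inversionProd q g := by
  subst h; rfl

lemma crossInversionProd_comp_perm {a b : ℕ} (q : Fin N → Fin N → R) (e : Fin a → Fin N)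
    (f : Fin b → Fin N) (τ : Perm (Fin a)) (ρ : Perm (Fin b)) :
    crossInversionProd q (e ∘ τ) (f ∘ ρ) = crossInversionProd q e f :=
  prod_equiv (τ.prodCongr ρ) (by simp) (by simp)

lemma inversionProd_append {a b : ℕ} (q : Fin N → Fin N → R) (e : Fin a → Fin N)
    (f : Fin b → Fin N) :
    inversionProd q (Fin.append e f) =
      inversionProd q e * inversionProd q f * crossInversionProd q e f := by
  have left_lt_right (i : Fin a) (j : Fin b) : (i : ℕ) < a + j := by omega
  have right_not_lt_left (i : Fin b) (j : Fin a) : ¬ a + (i : ℕ) < j := by omega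
  simp only [inversionProd, crossInversionProd, prod_filter, Fintype.prod_prod_type,
    Fin.prod_univ_add, Fin.append_left, Fin.append_right, Fin.lt_def, Fin.val_castAdd,
    Fin.val_natAdd, Nat.add_lt_add_iff_left, left_lt_right, right_not_lt_left, true_and,
    false_and, if_false, prod_const_one, mul_one, prod_mul_distrib]
  ring

end Inversions

lemma qSign_eq_inversionProd {N : ℕ} (q : Fin N → Fin N → K) (σ : Perm (Fin N)) :
    qSign q σ = inversionProd q σ := rfl

lemma qSign_eq_inversionProd_comp {N k : ℕ} (q : Fin N → Fin N → K) {e : Fin k → Fin N}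
    (he : StrictMono e) (τ : Perm (Fin k)) :
    qSign (fun i j => q (e i) (e j)) τ = inversionProd q (e ∘ τ) := by
  simp only [inversionProd, qSign, comp_apply, he.lt_iff_lt]

lemma inversionProd_append_comp_perm {a b N : ℕ} (q : Fin N → Fin N → K) {e : Fin a → Fin N}
    {f : Fin b → Fin N} (he : StrictMono e) (hf : StrictMono f) (τ : Perm (Fin a))
    (ρ : Perm (Fin b)) :
    inversionProd q (Fin.append (e ∘ τ) (f ∘ ρ)) =
      crossInversionProd q e f *
        (qSign (fun i j => q (e i) (e j)) τ * qSign (fun i j => q (f i) (f j)) ρ) := by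
  rw [inversionProd_append, crossInversionProd_comp_perm, qSign_eq_inversionProd_comp q he,
    qSign_eq_inversionProd_comp q hf]
  ring

section Sorting

variable {α : Type*} [LinearOrder α] {k a b : ℕ}

def sortFactor (g : Fin k → α) : (Fin k → α) × Perm (Fin k) :=
  (g ∘ Tuple.sort g, (Tuple.sort g)⁻¹)

lemma sortFactor_fst_comp_snd (g : Fin k → α) : (sortFactor g).1 ∘ (sortFactor g).2 = g := by
  ext i; simp [sortFactor]

lemma strictMono_sortFactor_fst {g : Fin k → α} (hg : Injective g) :
    StrictMono (sortFactor g).1 :=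
  (Tuple.monotone_sort g).strictMono_of_injective (hg.comp (Tuple.sort g).injective)

lemma sortFactor_comp_perm {e : Fin k → α} (he : StrictMono e) (τ : Perm (Fin k)) :
    sortFactor (e ∘ τ) = (e, τ) := by
  have sorted : (e ∘ τ) ∘ Tuple.sort (e ∘ τ) = e := by
    rw [Tuple.comp_perm_comp_sort_eq_comp_sort, Tuple.sort_eq_refl_iff_monotone.2 he.monotone]
    rfl
  refine Prod.ext sorted (inv_eq_iff_eq_inv.2 (Equiv.ext fun i => ?_))
  exact Perm.eq_inv_iff_eq.2 (he.injective (congrFun sorted i))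

def shuffleSplit (g : Fin (a + b) → α) :
    ((Fin a → α) × (Fin b → α)) × (Perm (Fin a) × Perm (Fin b)) :=
  let l := sortFactor (g ∘ Fin.castAdd b)
  let r := sortFactor (g ∘ Fin.natAdd a)
  ((l.1, r.1), (l.2, r.2))

lemma append_shuffleSplit (g : Fin (a + b) → α) :
    let x := shuffleSplit g
    Fin.append (x.1.1 ∘ x.2.1) (x.1.2 ∘ x.2.2) = g := by
  simp only [shuffleSplit, sortFactor_fst_comp_snd]
  exact Fin.append_castAdd_natAdd

lemma shuffleSplit_append {e : Fin a → α} {f : Fin b → α} (he : StrictMono e)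
    (hf : StrictMono f) (τ : Perm (Fin a)) (ρ : Perm (Fin b)) :
    shuffleSplit (Fin.append (e ∘ τ) (f ∘ ρ)) = ((e, f), (τ, ρ)) := by
  have left : Fin.append (e ∘ τ) (f ∘ ρ) ∘ Fin.castAdd b = e ∘ τ := funext (Fin.append_left _ _)
  have right : Fin.append (e ∘ τ) (f ∘ ρ) ∘ Fin.natAdd a = f ∘ ρ :=
    funext (Fin.append_right _ _)
  simp only [shuffleSplit, left, right, sortFactor_comp_perm he, sortFactor_comp_perm hf]

end Sorting

section Shuffles

variable {a b N : ℕ}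

-- `(e, f) ∈ shuffles a b N` lists increasingly an `a`-element subset `I` of `Fin N` and a
-- `b`-element subset disjoint from it, which is `Iᶜ` when `a + b = N`.
def shuffles (a b N : ℕ) : Finset ((Fin a → Fin N) × (Fin b → Fin N)) :=
  univ.filter fun ef =>
    (∀ i j, i < j → ef.1 i < ef.1 j) ∧ (∀ i j, i < j → ef.2 i < ef.2 j) ∧ ∀ i j, ef.1 i ≠ ef.2 j

lemma mem_shuffles {ef : (Fin a → Fin N) × (Fin b → Fin N)} :
    ef ∈ shuffles a b N ↔ StrictMono ef.1 ∧ StrictMono ef.2 ∧ ∀ i j, ef.1 i ≠ ef.2 j := by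
  simp only [shuffles, mem_filter, mem_univ, true_and]
  rfl

lemma shuffleSplit_fst_mem_shuffles {g : Fin (a + b) → Fin N} (hg : Injective g) :
    (shuffleSplit g).1 ∈ shuffles a b N := by
  rw [← Fin.append_castAdd_natAdd (f := g), Fin.append_injective_iff] at hg
  obtain ⟨hl, hr, hlr⟩ := hg
  exact mem_shuffles.2
    ⟨strictMono_sortFactor_fst hl, strictMono_sortFactor_fst hr, fun i j => hlr _ _⟩

lemma injective_append_of_mem_shuffles {ef : (Fin a → Fin N) × (Fin b → Fin N)}
    (hef : ef ∈ shuffles a b N) (τ : Perm (Fin a)) (ρ : Perm (Fin b)) :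
    Injective (Fin.append (ef.1 ∘ τ) (ef.2 ∘ ρ)) :=
  let ⟨he, hf, hdisj⟩ := mem_shuffles.1 hef
  Fin.append_injective_iff.2
    ⟨he.injective.comp τ.injective, hf.injective.comp ρ.injective, fun _ _ => hdisj _ _⟩

noncomputable def permOfInjective (h : a + b = N) {g : Fin (a + b) → Fin N}
    (hg : Injective g) : Perm (Fin N) :=
  Equiv.ofBijective (g ∘ Fin.cast h.symm)
    (Finite.injective_iff_bijective.1 (hg.comp (Fin.cast_injective _)))

lemma permOfInjective_comp_cast (h : a + b = N) {g : Fin (a + b) → Fin N} (hg : Injective g) :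
    permOfInjective h hg ∘ Fin.cast h = g := by
  ext i; simp [permOfInjective]

theorem sum_perm_eq_sum_shuffles {M : Type*} [AddCommMonoid M] (h : a + b = N)
    (F : (Fin (a + b) → Fin N) → M) :
    ∑ σ : Perm (Fin N), F (σ ∘ Fin.cast h) =
      ∑ ef ∈ shuffles a b N, ∑ τ : Perm (Fin a), ∑ ρ : Perm (Fin b),
        F (Fin.append (ef.1 ∘ τ) (ef.2 ∘ ρ)) := by
  simp_rw [← Fintype.sum_prod_type']
  rw [← univ_product_univ, ← sum_product']
  refine sum_bij' (fun σ _ => shuffleSplit (σ ∘ Fin.cast h))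
    (fun x hx =>
      permOfInjective h (injective_append_of_mem_shuffles (mem_product.1 hx).1 x.2.1 x.2.2))
    (fun σ _ => mem_product.2
      ⟨shuffleSplit_fst_mem_shuffles (σ.injective.comp (Fin.cast_injective h)), mem_univ _⟩)
    (fun _ _ => mem_univ _) ?_ ?_ ?_
  · intro σ _
    refine DFunLike.coe_injective ((finCongr h).surjective.injective_comp_right ?_)
    change permOfInjective h _ ∘ Fin.cast h = σ ∘ Fin.cast h
    rw [permOfInjective_comp_cast, append_shuffleSplit]
  · rintro ⟨⟨e, f⟩, τ, ρ⟩ hx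
    obtain ⟨he, hf, -⟩ := mem_shuffles.1 (mem_product.1 hx).1
    rw [permOfInjective_comp_cast, shuffleSplit_append he hf]
  · intro σ _
    rw [append_shuffleSplit]

end Shuffles

lemma oprod_append {t s : ℕ} (g : Fin (t + s) → A) :
    oprod g = oprod (g ∘ Fin.castAdd s) * oprod (g ∘ Fin.natAdd t) := by
  simp only [oprod, ← List.ofFn_eq_map, List.ofFn_add, List.prod_append]
  rfl

section Blocks

variable {m t s : ℕ} {α β : Type*}

def IsBlockIncreasing {n : ℕ} [Preorder α] (g : Fin (m * n) → α) : Prop :=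
  ∀ (k : Fin n) (a b : Fin m), a < b → g (midx k a) < g (midx k b)

def blockProd {n : ℕ} (B : (Fin m → β) → A) (g : Fin (m * n) → β) : A :=
  oprod fun k : Fin n => B fun a => g (midx k a)

lemma midx_castAdd (k : Fin t) (a : Fin m) :
    Fin.cast (Nat.mul_add m t s) (midx (Fin.castAdd s k) a) = Fin.castAdd (m * s) (midx k a) :=
  rfl

lemma midx_natAdd (k : Fin s) (a : Fin m) :
    Fin.cast (Nat.mul_add m t s) (midx (Fin.natAdd t k) a) = Fin.natAdd (m * t) (midx k a) :=
  Fin.ext (by simp only [midx, Fin.val_cast, Fin.val_natAdd]; ring)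

lemma isBlockIncreasing_append_iff [Preorder α] (l : Fin (m * t) → α) (r : Fin (m * s) → α) :
    IsBlockIncreasing (Fin.append l r ∘ Fin.cast (Nat.mul_add m t s)) ↔
      IsBlockIncreasing l ∧ IsBlockIncreasing r := by
  simp only [IsBlockIncreasing, Fin.forall_fin_add, comp_apply, midx_castAdd, midx_natAdd,
    Fin.append_left, Fin.append_right]

lemma blockProd_append (B : (Fin m → β) → A) (l : Fin (m * t) → β) (r : Fin (m * s) → β) :
    blockProd B (Fin.append l r ∘ Fin.cast (Nat.mul_add m t s)) =
      blockProd B l * blockProd B r := by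
  simp only [blockProd, oprod_append (t := t) (s := s), comp_def, midx_castAdd, midx_natAdd,
    Fin.append_left, Fin.append_right]

lemma isBlockIncreasing_comp_iff [LinearOrder α] [Preorder β] {e : α → β} (he : StrictMono e)
    {n : ℕ} (g : Fin (m * n) → α) : IsBlockIncreasing (e ∘ g) ↔ IsBlockIncreasing g := by
  simp only [IsBlockIncreasing, comp_apply, he.lt_iff_lt]

lemma blockProd_comp {γ : Type*} {n : ℕ} (B : (Fin m → β) → A) (e : γ → β)
    (g : Fin (m * n) → γ) : blockProd (fun J => B fun a => e (J a)) g = blockProd B (e ∘ g) :=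
  rfl

end Blocks

open Classical in
lemma qhpf_eq_sum_ite {m n : ℕ} (q : Fin (m * n) → Fin (m * n) → K)
    (B : (Fin m → Fin (m * n)) → A) :
    qhpf q B = ∑ σ : Perm (Fin (m * n)),
      if IsBlockIncreasing σ then qSign q σ • blockProd B σ else 0 := by
  rw [qhpf, sum_filter]
  exact sum_congr rfl fun σ _ => if_congr Iff.rfl rfl rfl

theorem qhpf_eq_sum_shuffles {m t s : ℕ} (q : Fin (m * (t + s)) → Fin (m * (t + s)) → K)
    (B : (Fin m → Fin (m * (t + s))) → A) :
    qhpf q B = ∑ ef ∈ shuffles (m * t) (m * s) (m * (t + s)),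
      crossInversionProd q ef.1 ef.2 •
        (qhpf (fun a b => q (ef.1 a) (ef.1 b)) (fun J => B (fun a => ef.1 (J a))) *
          qhpf (fun a b => q (ef.2 a) (ef.2 b)) (fun J => B (fun a => ef.2 (J a)))) := by
  classical
  have hmul := Nat.mul_add m t s
  let F : (Fin (m * t + m * s) → Fin (m * (t + s))) → A := fun g =>
    if IsBlockIncreasing (g ∘ Fin.cast hmul) then
      inversionProd q g • blockProd B (g ∘ Fin.cast hmul)
    else 0
  have lhs : qhpf q B = ∑ σ : Perm (Fin (m * (t + s))), F (σ ∘ Fin.cast hmul.symm) := by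
    have cast_cancel (σ : Perm (Fin (m * (t + s)))) :
        (σ ∘ Fin.cast hmul.symm) ∘ Fin.cast hmul = σ := by
      ext; simp
    rw [qhpf_eq_sum_ite]
    refine sum_congr rfl fun σ _ => ?_
    simp only [F, cast_cancel, inversionProd_comp_cast, qSign_eq_inversionProd]
  have term (ef) (hef : ef ∈ shuffles (m * t) (m * s) (m * (t + s))) (τ : Perm (Fin (m * t)))
      (ρ : Perm (Fin (m * s))) :
      F (Fin.append (ef.1 ∘ τ) (ef.2 ∘ ρ)) =
        if IsBlockIncreasing τ ∧ IsBlockIncreasing ρ then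
          crossInversionProd q ef.1 ef.2 •
            (qSign (fun a b => q (ef.1 a) (ef.1 b)) τ •
                blockProd (fun J => B fun a => ef.1 (J a)) τ *
              qSign (fun a b => q (ef.2 a) (ef.2 b)) ρ •
                blockProd (fun J => B fun a => ef.2 (J a)) ρ)
        else 0 := by
    obtain ⟨he, hf, -⟩ := mem_shuffles.1 hef
    simp only [F, isBlockIncreasing_append_iff, isBlockIncreasing_comp_iff he,
      isBlockIncreasing_comp_iff hf, inversionProd_append_comp_perm q he hf, blockProd_append,
      blockProd_comp]
    refine if_congr Iff.rfl ?_ rfl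
    rw [smul_mul_smul_comm, smul_smul]
  rw [lhs, sum_perm_eq_sum_shuffles hmul.symm]
  refine sum_congr rfl fun ef hef => ?_
  rw [qhpf_eq_sum_ite, qhpf_eq_sum_ite, sum_mul_sum, smul_sum]
  refine sum_congr rfl fun τ _ => ?_
  rw [smul_sum]
  refine sum_congr rfl fun ρ _ => ?_
  rw [term ef hef τ ρ, ite_and]
  split_ifs <;> simp only [zero_mul, mul_zero, smul_zero]

theorem qhpf_expansion_general {m n : ℕ}
    (q : Fin (m * n) → Fin (m * n) → K) (B : (Fin m → Fin (m * n)) → A)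
    (t : ℕ) (ht : t ≤ n) :
    qhpf q B
      = ∑ ef ∈ Finset.univ.filter
          (fun ef : (Fin (m * t) → Fin (m * n)) × (Fin (m * (n - t)) → Fin (m * n)) =>
            (∀ a b, a < b → ef.1 a < ef.1 b) ∧ (∀ a b, a < b → ef.2 a < ef.2 b) ∧
            (∀ a b, ef.1 a ≠ ef.2 b)),
        (∏ x ∈ Finset.univ.filter
            (fun x : Fin (m * t) × Fin (m * (n - t)) => ef.2 x.2 < ef.1 x.1),
          (-q (ef.2 x.2) (ef.1 x.1))) •
        (qhpf (fun a b => q (ef.1 a) (ef.1 b)) (fun J => B (fun a => ef.1 (J a)))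
          * qhpf (fun a b => q (ef.2 a) (ef.2 b)) (fun J => B (fun a => ef.2 (J a)))) := by
  obtain ⟨s, rfl⟩ := Nat.exists_eq_add_of_le ht
  rw [Nat.add_sub_cancel_left]
  exact qhpf_eq_sum_shuffles q B

/-- hyper-Pfaffian expansion:
`Pf_q(B) = Σ_I inv(I, Iᶜ) Pf_q(B_I) Pf_q(B_{Iᶜ})`, the sum running over all
`mt`-element subsets `I` of `{1, …, mn}`; a subset together with its complement is
encoded by the pair of strictly increasing enumerations `(e, f)` with disjoint
ranges. -/
theorem qhpf_expansion {m n : ℕ} (hm : 2 ≤ m)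
    (p q : Fin (m * n) → Fin (m * n) → K) (u : K)
    (hpu : PUCondition p q u) (B : (Fin m → Fin (m * n)) → A)
    (t : ℕ) (ht : t ≤ n) :
    qhpf q B
      = ∑ ef ∈ Finset.univ.filter
          (fun ef : (Fin (m * t) → Fin (m * n)) × (Fin (m * (n - t)) → Fin (m * n)) =>
            (∀ a b, a < b → ef.1 a < ef.1 b) ∧ (∀ a b, a < b → ef.2 a < ef.2 b) ∧
            (∀ a b, ef.1 a ≠ ef.2 b)),
        (∏ x ∈ Finset.univ.filter
            (fun x : Fin (m * t) × Fin (m * (n - t)) => ef.2 x.2 < ef.1 x.1),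
          (-q (ef.2 x.2) (ef.1 x.1))) •
        (qhpf (fun a b => q (ef.1 a) (ef.1 b)) (fun J => B (fun a => ef.1 (J a)))
          * qhpf (fun a b => q (ef.2 a) (ef.2 b)) (fun J => B (fun a => ef.2 (J a)))) :=
  qhpf_expansion_general q B t ht
end
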